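/- arXiv:2003.05575 — 3 statements merged into one kernel-verified Lean document; each statement's English description precedes it below -/
import Mathlib

section
/- Let m, n ≥ 1, η ∈ [0,1], and ζ, Δ, α ≥ 0 with α ≥ 2Δ + ζ. Let A′ be a random matrix over F₂^{m×n} that is an (η, n·(1−ζ))-block source, and let x be a random vector over F₂^n with H_∞(x) ≥ α·n, where A′ and x are independent. Then there exists a set T ⊆ {1, …, m} with |T| ≥ (1−η)·m such that the distribution of (A′x)_T — the restriction to the coordinates in T of the matrix-vector product A′x ∈ F₂^m — is ε-close to the uniform distribution on F₂^T for some ε ≤ |T|·2^{−Δ·n}. -/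
/-!
Take `T` to be the complement of the exceptional rows `S`. A hybrid argument over the rows of `T`,
in increasing order, compares the law of `(A x)_T`, padded with uniform bits off `T`, with the
uniform law. Adding a row `i` moves the hybrid by the bias of `(A x)_i` on the event that the
earlier coordinates are fixed. Conditioning on the rows above `i`, that bias is at most the
`μx`-average of the absolute Fourier coefficients of the conditional law of row `i`, and by
Cauchy–Schwarz and Parseval this average is at most
`√(2ⁿ · 2^(-n(1-ζ)) · 2^(-αn)) ≤ 2^(-Δn)` (the leftover hash lemma for the inner product).
-/

open Finset

open Classical in
/-- Probability of an event for a random matrix over `F₂` with mass function `μ`. -/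
noncomputable def prEvt {m n : ℕ} (μ : Matrix (Fin m) (Fin n) (ZMod 2) → ℝ)
    (E : Matrix (Fin m) (Fin n) (ZMod 2) → Prop) : ℝ :=
  ∑ A, if E A then μ A else 0

/-- `rowsAgree i A B` says that the first `i` rows of `A` and `B` coincide. -/
def rowsAgree {m n : ℕ} (i : ℕ) (A B : Matrix (Fin m) (Fin n) (ZMod 2)) : Prop :=
  ∀ j : Fin m, (j : ℕ) < i → A j = B j

/-- `ν` (a distribution on `F₂^{m×n}`) is an `(η, n')`-block source: there is a set `S` of at
most `η·m` rows such that for every matrix in the support and every row `i ∉ S`, every value of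
row `i` has conditional probability at most `2^{-n'}` given the previous rows. -/
def IsBlockSource {m n : ℕ} (ν : Matrix (Fin m) (Fin n) (ZMod 2) → ℝ) (η n' : ℝ) : Prop :=
  ∃ S : Finset (Fin m), (S.card : ℝ) ≤ η * (m : ℝ) ∧
    ∀ A₀, 0 < ν A₀ → ∀ i : Fin m, i ∉ S → ∀ w : Fin n → ZMod 2,
      prEvt ν (fun C => C i = w ∧ rowsAgree (i : ℕ) C A₀)
        / prEvt ν (fun C => rowsAgree (i : ℕ) C A₀) ≤ (2 : ℝ) ^ (-n')

open Classical in
/-- The distribution of the restriction of the matrix-vector product `A·x` to the rows in `T`,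
where `A ~ μA` and `x ~ μx` are independent. -/
noncomputable def prodDistOn {m n : ℕ} (μA : Matrix (Fin m) (Fin n) (ZMod 2) → ℝ)
    (μx : (Fin n → ZMod 2) → ℝ) (T : Finset (Fin m))
    (z : {i : Fin m // i ∈ T} → ZMod 2) : ℝ :=
  ∑ A, ∑ x₀,
    if (∀ i : {i : Fin m // i ∈ T}, A.mulVec x₀ i.1 = z i) then μA A * μx x₀ else 0

open Matrix

noncomputable def signChar : AddChar (ZMod 2) ℝ :=
  AddChar.zmodChar 2 (by norm_num : (-1 : ℝ) ^ 2 = 1)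

lemma signChar_one : signChar 1 = -1 := by
  simp [signChar, AddChar.zmodChar_apply, ZMod.val_one]

lemma signChar_add_eq_ite (a b : ZMod 2) : signChar (a + b) = if a = b then 1 else -1 := by
  have : ∀ a b : ZMod 2, a + b = 0 ∧ a = b ∨ a + b = 1 ∧ a ≠ b := by decide
  rcases this a b with ⟨h, hab⟩ | ⟨h, hab⟩ <;> rw [h] <;> simp [hab, signChar_one]

lemma abs_signChar (a : ZMod 2) : |signChar a| = 1 := by
  rw [← add_zero a, signChar_add_eq_ite]
  split_ifs <;> simp

lemma sum_sq_le_of_forall_le {α : Type*} [Fintype α] {μ : α → ℝ} {c : ℝ} (hμ0 : ∀ a, 0 ≤ μ a)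
    (hμ1 : ∑ a, μ a = 1) (hμc : ∀ a, μ a ≤ c) : ∑ a, μ a ^ 2 ≤ c := by
  calc ∑ a, μ a ^ 2 ≤ ∑ a, c * μ a :=
        sum_le_sum fun a _ => by rw [sq]; exact mul_le_mul_of_nonneg_right (hμc a) (hμ0 a)
    _ = c := by rw [← mul_sum, hμ1, mul_one]

lemma sum_sq_le_mul_sq_sum_of_forall_le {α : Type*} [Fintype α] {q : α → ℝ} {c : ℝ}
    (hq0 : ∀ a, 0 ≤ q a) (hqc : ∀ a, q a ≤ c * ∑ b, q b) : ∑ a, q a ^ 2 ≤ c * (∑ a, q a) ^ 2 := by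
  calc ∑ a, q a ^ 2 ≤ ∑ a, c * (∑ b, q b) * q a :=
        sum_le_sum fun a _ => by rw [sq]; exact mul_le_mul_of_nonneg_right (hqc a) (hq0 a)
    _ = c * (∑ a, q a) ^ 2 := by rw [← mul_sum]; ring

section Fourier

variable {ι : Type*} [Fintype ι] [DecidableEq ι]

lemma sum_signChar_dotProduct (v : ι → ZMod 2) :
    ∑ x, signChar (v ⬝ᵥ x) = if v = 0 then 2 ^ Fintype.card ι else 0 := by
  let ψ : AddChar (ι → ZMod 2) ℝ :=
    signChar.compAddMonoidHom (AddMonoidHom.mk' (v ⬝ᵥ ·) (dotProduct_add v))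
  have hψ : ψ = 0 ↔ v = 0 := by
    refine ⟨fun h => ?_, fun h => ?_⟩
    · by_contra hv
      obtain ⟨j, hj⟩ := Function.ne_iff.1 hv
      have hj1 : v j = 1 := (by decide : ∀ a : ZMod 2, a ≠ 0 → a = 1) _ hj
      have := DFunLike.congr_fun h (Pi.single j 1)
      norm_num [ψ, dotProduct_single, hj1, signChar_one] at this
    · ext x; simp [ψ, h]
  classical
  have := ψ.sum_eq_ite
  simp only [hψ] at this
  simpa [ψ, Fintype.card_fun] using this

lemma sum_sq_sum_mul_signChar (q : (ι → ZMod 2) → ℝ) :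
    ∑ x, (∑ w, q w * signChar (w ⬝ᵥ x)) ^ 2 = 2 ^ Fintype.card ι * ∑ w, q w ^ 2 := by
  have hexpand : ∀ x : ι → ZMod 2, (∑ w, q w * signChar (w ⬝ᵥ x)) ^ 2 =
      ∑ w, ∑ w', q w * q w' * signChar ((w + w') ⬝ᵥ x) := by
    intro x
    simp only [sq, sum_mul_sum, add_dotProduct, AddChar.map_add_eq_mul]
    exact sum_congr rfl fun _ _ => sum_congr rfl fun _ _ => by ring
  have horth : ∀ w w' : ι → ZMod 2, ∑ x, signChar ((w + w') ⬝ᵥ x) =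
      if w = w' then 2 ^ Fintype.card ι else 0 := by
    intro w w'
    simp only [sum_signChar_dotProduct, ← ZModModule.sub_eq_add, sub_eq_zero]
  calc ∑ x, (∑ w, q w * signChar (w ⬝ᵥ x)) ^ 2
      = ∑ w, ∑ w', q w * q w' * ∑ x, signChar ((w + w') ⬝ᵥ x) := by
        simp only [hexpand, mul_sum]
        rw [sum_comm]
        exact sum_congr rfl fun _ _ => sum_comm
    _ = 2 ^ Fintype.card ι * ∑ w, q w ^ 2 := by
        simp only [horth, mul_ite, mul_zero, sum_ite_eq, mem_univ, if_true, mul_sum, sq]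
        exact sum_congr rfl fun _ _ => by ring

lemma sum_mul_abs_sum_mul_signChar_le {q μ : (ι → ZMod 2) → ℝ} {c₁ c₂ ε : ℝ}
    (hq0 : ∀ w, 0 ≤ q w) (hq : ∀ w, q w ≤ c₁ * ∑ w', q w')
    (hμ0 : ∀ x, 0 ≤ μ x) (hμ1 : ∑ x, μ x = 1) (hμ : ∀ x, μ x ≤ c₂)
    (hε : 0 ≤ ε) (hc : 2 ^ Fintype.card ι * c₁ * c₂ ≤ ε ^ 2) :
    ∑ x, μ x * |∑ w, q w * signChar (w ⬝ᵥ x)| ≤ ε * ∑ w, q w := by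
  refine le_of_pow_le_pow_left₀ two_ne_zero (mul_nonneg hε (sum_nonneg fun w _ => hq0 w)) ?_
  calc (∑ x, μ x * |∑ w, q w * signChar (w ⬝ᵥ x)|) ^ 2
      ≤ (∑ x, μ x ^ 2) * ∑ x, |∑ w, q w * signChar (w ⬝ᵥ x)| ^ 2 :=
        sum_mul_sq_le_sq_mul_sq _ _ _
    _ ≤ c₂ * (2 ^ Fintype.card ι * (c₁ * (∑ w, q w) ^ 2)) := by
        simp only [sq_abs, sum_sq_sum_mul_signChar]
        gcongr
        · exact (hμ0 0).trans (hμ 0)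
        · exact sum_sq_le_of_forall_le hμ0 hμ1 hμ
        · exact sum_sq_le_mul_sq_sum_of_forall_le hq0 hq
    _ ≤ (ε * ∑ w, q w) ^ 2 := by
        rw [mul_pow]
        nlinarith [sq_nonneg (∑ w, q w)]

end Fourier

lemma pow_card_mul_sum_comp_restrict {ι β : Type*} [Fintype ι] [DecidableEq ι] [Fintype β]
    (T : Finset ι) (f : (T → β) → ℝ) :
    (Fintype.card β : ℝ) ^ #T * ∑ z : ι → β, f (T.restrict z)
      = (Fintype.card β : ℝ) ^ Fintype.card ι * ∑ y, f y := by
  rw [← (Equiv.piEquivPiSubtypeProd (· ∈ T) (fun _ => β)).symm.sum_comp,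
    Fintype.sum_prod_type, ← Fintype.card_coe T]
  have hrestrict : ∀ a b,
      T.restrict ((Equiv.piEquivPiSubtypeProd (· ∈ T) (fun _ => β)).symm (a, b)) = a := by
    intro a b
    ext j
    simp [Finset.restrict, j.2]
  simp only [hrestrict, sum_const, card_univ, nsmul_eq_mul, ← mul_sum, ← mul_assoc]
  congr 1
  rw [Fintype.card_fun, Fintype.card_subtype_compl]
  push_cast
  rw [← pow_add, Nat.add_sub_cancel' (Fintype.card_subtype_le _)]

lemma sum_ite_forall_mem_eq {m : ℕ} (T : Finset (Fin m)) (v : Fin m → ZMod 2) :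
    ∑ z : Fin m → ZMod 2, (if ∀ j ∈ T, v j = z j then (1 : ℝ) else 0) = 2 ^ m / 2 ^ #T := by
  have := pow_card_mul_sum_comp_restrict T (fun y => if T.restrict v = y then (1 : ℝ) else 0)
  simp only [ZMod.card, Fintype.card_fin, Nat.cast_ofNat, sum_ite_eq, mem_univ, if_true,
    mul_one] at this
  rw [eq_div_iff (by positivity), mul_comm, ← this]
  congr 1
  refine sum_congr rfl fun z _ => if_congr ?_ rfl rfl
  simp [funext_iff, Finset.restrict]

variable {m n : ℕ} {μ : Matrix (Fin m) (Fin n) (ZMod 2) → ℝ}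

section prEvt

lemma prEvt_congr {E F : Matrix (Fin m) (Fin n) (ZMod 2) → Prop} (h : ∀ C, E C ↔ F C) :
    prEvt μ E = prEvt μ F := by
  rw [show E = F from funext fun C => propext (h C)]

lemma prEvt_nonneg (hμ : ∀ A, 0 ≤ μ A) (E : Matrix (Fin m) (Fin n) (ZMod 2) → Prop) :
    0 ≤ prEvt μ E :=
  sum_nonneg fun C _ => by split_ifs <;> simp [hμ C]

lemma prEvt_mono (hμ : ∀ A, 0 ≤ μ A) {E F : Matrix (Fin m) (Fin n) (ZMod 2) → Prop}
    (h : ∀ C, E C → F C) : prEvt μ E ≤ prEvt μ F := by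
  classical
  refine sum_le_sum fun C _ => ?_
  by_cases hE : E C
  · simp [hE, h C hE]
  · simp only [hE, if_false]; split_ifs <;> simp [hμ C]

lemma sum_prEvt_eq {β : Type*} [Fintype β] (g : Matrix (Fin m) (Fin n) (ZMod 2) → β) :
    ∑ b, prEvt μ (fun C => g C = b) = ∑ A, μ A := by
  classical
  unfold prEvt
  rw [sum_comm]
  simp

lemma sum_prEvt_and_eq {β : Type*} [Fintype β] (E : Matrix (Fin m) (Fin n) (ZMod 2) → Prop)
    (g : Matrix (Fin m) (Fin n) (ZMod 2) → β) :
    ∑ b, prEvt μ (fun C => E C ∧ g C = b) = prEvt μ E := by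
  classical
  unfold prEvt
  rw [sum_comm]
  refine sum_congr rfl fun C _ => ?_
  by_cases hE : E C <;> simp [hE]

lemma sum_mul_comp_eq_sum_prEvt {β : Type*} [Fintype β]
    (g : Matrix (Fin m) (Fin n) (ZMod 2) → β) (f : β → ℝ) :
    ∑ A, μ A * f (g A) = ∑ b, prEvt μ (fun C => g C = b) * f b := by
  classical
  unfold prEvt
  simp only [sum_mul, ite_mul, zero_mul]
  rw [sum_comm]
  simp

end prEvt

/-- The rows of `A` above row `i`, padded with zero rows: its fibres are the classes of
`rowsAgree i`. -/
def firstRows (i : Fin m) (A : Matrix (Fin m) (Fin n) (ZMod 2)) :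
    Matrix (Fin m) (Fin n) (ZMod 2) :=
  fun j => if j < i then A j else 0

def RowCondProbLE (μ : Matrix (Fin m) (Fin n) (ZMod 2) → ℝ) (i : Fin m) (c : ℝ) : Prop :=
  ∀ A₀, 0 < μ A₀ → ∀ w : Fin n → ZMod 2,
    prEvt μ (fun C => C i = w ∧ rowsAgree (i : ℕ) C A₀)
      / prEvt μ (fun C => rowsAgree (i : ℕ) C A₀) ≤ c

lemma firstRows_eq_firstRows_iff {i : Fin m} {A B : Matrix (Fin m) (Fin n) (ZMod 2)} :
    firstRows i A = firstRows i B ↔ rowsAgree i A B := by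
  constructor
  · intro h j hj
    simpa [firstRows, Fin.lt_def, hj] using congrFun h j
  · intro h
    funext j
    simp only [firstRows]
    split_ifs with hj
    · exact h j hj
    · rfl

lemma mulVec_firstRows_of_lt {i j : Fin m} (hj : j < i) (A : Matrix (Fin m) (Fin n) (ZMod 2))
    (x : Fin n → ZMod 2) : (firstRows i A *ᵥ x) j = (A *ᵥ x) j := by
  simp [firstRows, mulVec, hj]

lemma prEvt_firstRows_and_row_le (hμ : ∀ A, 0 ≤ μ A) {i : Fin m} {c : ℝ}
    (hrow : RowCondProbLE μ i c)
    (P : Matrix (Fin m) (Fin n) (ZMod 2)) (w : Fin n → ZMod 2) :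
    prEvt μ (fun C => firstRows i C = P ∧ C i = w) ≤
      c * prEvt μ (fun C => firstRows i C = P) := by
  have hle : prEvt μ (fun C => firstRows i C = P ∧ C i = w) ≤
      prEvt μ (fun C => firstRows i C = P) := prEvt_mono hμ fun C h => h.1
  by_cases hzero : prEvt μ (fun C => firstRows i C = P) = 0
  · rwa [hzero, mul_zero, ← hzero]
  obtain ⟨A₀, -, hA₀⟩ := exists_ne_zero_of_sum_ne_zero hzero
  have hP : firstRows i A₀ = P := by
    by_contra h
    simp [h] at hA₀
  rw [if_pos hP] at hA₀
  have hagree : ∀ C, firstRows i C = P ↔ rowsAgree i C A₀ := fun C => by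
    rw [← hP, firstRows_eq_firstRows_iff]
  have hden : prEvt μ (fun C => rowsAgree i C A₀) = prEvt μ (fun C => firstRows i C = P) :=
    prEvt_congr fun C => (hagree C).symm
  have hnum : prEvt μ (fun C => C i = w ∧ rowsAgree i C A₀) =
      prEvt μ (fun C => firstRows i C = P ∧ C i = w) :=
    prEvt_congr fun C => by rw [hagree, and_comm]
  have := hrow A₀ ((hμ A₀).lt_of_ne' hA₀) w
  rwa [hnum, hden, div_le_iff₀ ((prEvt_nonneg hμ _).lt_of_ne' hzero)] at this

section Hybrid

variable (μA : Matrix (Fin m) (Fin n) (ZMod 2) → ℝ) (μx : (Fin n → ZMod 2) → ℝ)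

/-- The law of the vector that agrees with `A x` on `T` and is uniform off `T`. -/
noncomputable def hybrid (T : Finset (Fin m)) (z : Fin m → ZMod 2) : ℝ :=
  2 ^ #T / 2 ^ m * prodDistOn μA μx T (T.restrict z)

lemma prodDistOn_restrict (T : Finset (Fin m)) (z : Fin m → ZMod 2) :
    prodDistOn μA μx T (T.restrict z) =
      ∑ A, ∑ x, if ∀ j ∈ T, (A *ᵥ x) j = z j then μA A * μx x else 0 := by
  simp [prodDistOn, Finset.restrict]

lemma sum_abs_hybrid_sub_eq (T : Finset (Fin m)) :
    ∑ z, |hybrid μA μx T z - 1 / 2 ^ m| = ∑ y, |prodDistOn μA μx T y - 1 / 2 ^ #T| := by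
  have hscale : ∀ z, |hybrid μA μx T z - 1 / 2 ^ m| =
      2 ^ #T / 2 ^ m * |prodDistOn μA μx T (T.restrict z) - 1 / 2 ^ #T| := fun z => by
    rw [hybrid, ← abs_of_pos (by positivity : (0 : ℝ) < 2 ^ #T / 2 ^ m), ← abs_mul,
      abs_of_pos (by positivity : (0 : ℝ) < 2 ^ #T / 2 ^ m)]
    field_simp
  have := pow_card_mul_sum_comp_restrict T (fun y => |prodDistOn μA μx T y - 1 / 2 ^ #T|)
  simp only [ZMod.card, Fintype.card_fin, Nat.cast_ofNat] at this
  rw [sum_congr rfl fun z _ => hscale z, ← mul_sum, div_mul_eq_mul_div, this,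
    mul_div_cancel_left₀ _ (by positivity)]

variable {μA μx}

lemma hybrid_empty (hA1 : ∑ A, μA A = 1) (hx1 : ∑ x, μx x = 1) (z : Fin m → ZMod 2) :
    hybrid μA μx ∅ z = 1 / 2 ^ m := by
  simp [hybrid, prodDistOn_restrict, ← sum_mul_sum, hA1, hx1]

lemma hybrid_insert_sub_eq {i : Fin m} {T : Finset (Fin m)} (hi : i ∉ T) (z : Fin m → ZMod 2) :
    hybrid μA μx (insert i T) z - hybrid μA μx T z = 2 ^ #T / 2 ^ m *
      ∑ A, ∑ x, μA A * μx x *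
        if ∀ j ∈ T, (A *ᵥ x) j = z j then signChar ((A *ᵥ x) i + z i) else 0 := by
  simp only [hybrid, prodDistOn_restrict, card_insert_of_notMem hi, pow_succ, mul_sum,
    ← sum_sub_distrib, forall_mem_insert]
  refine sum_congr rfl fun A _ => sum_congr rfl fun x _ => ?_
  rw [signChar_add_eq_ite]
  split_ifs <;> first | (exfalso; tauto) | ring

/-- The Fourier transform at `x` of the law of row `i` restricted to the event that the rows
above `i` are those of `P`. -/
noncomputable def rowBias (μA : Matrix (Fin m) (Fin n) (ZMod 2) → ℝ) (i : Fin m)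
    (P : Matrix (Fin m) (Fin n) (ZMod 2)) (x : Fin n → ZMod 2) : ℝ :=
  ∑ w, prEvt μA (fun C => firstRows i C = P ∧ C i = w) * signChar (w ⬝ᵥ x)

lemma sum_signed_eq_sum_rowBias {i : Fin m} {T : Finset (Fin m)} (hT : ∀ j ∈ T, j < i)
    (z : Fin m → ZMod 2) :
    ∑ A, ∑ x, μA A * μx x *
        (if ∀ j ∈ T, (A *ᵥ x) j = z j then signChar ((A *ᵥ x) i + z i) else 0) =
      signChar (z i) * ∑ P, ∑ x, μx x *
        if ∀ j ∈ T, (P *ᵥ x) j = z j then rowBias μA i P x else 0 := by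
  set F : Matrix (Fin m) (Fin n) (ZMod 2) × (Fin n → ZMod 2) → ℝ := fun p =>
    ∑ x, μx x * if ∀ j ∈ T, (p.1 *ᵥ x) j = z j then signChar (p.2 ⬝ᵥ x + z i) else 0
  have hfirst : ∀ A, ∑ x, μA A * μx x *
      (if ∀ j ∈ T, (A *ᵥ x) j = z j then signChar ((A *ᵥ x) i + z i) else 0) =
        μA A * F (firstRows i A, A i) := fun A => by
    simp only [F, mul_sum, ← mul_assoc]
    refine sum_congr rfl fun x _ => ?_
    have hagree : (∀ j ∈ T, (firstRows i A *ᵥ x) j = z j) ↔ ∀ j ∈ T, (A *ᵥ x) j = z j :=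
      forall₂_congr fun j hj => by rw [mulVec_firstRows_of_lt (hT j hj)]
    rw [if_congr hagree rfl rfl]
    rfl
  rw [sum_congr rfl fun A _ => hfirst A, sum_mul_comp_eq_sum_prEvt, Fintype.sum_prod_type, mul_sum]
  refine sum_congr rfl fun P _ => ?_
  simp only [F, rowBias, Prod.mk.injEq, mul_sum]
  rw [sum_comm]
  refine sum_congr rfl fun x _ => ?_
  split_ifs
  · simp only [AddChar.map_add_eq_mul, mul_sum]
    exact sum_congr rfl fun w _ => by ring
  · simp

end Hybrid

section Extraction

variable {μA : Matrix (Fin m) (Fin n) (ZMod 2) → ℝ} {μx : (Fin n → ZMod 2) → ℝ}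
  {c₁ c₂ ε : ℝ}

lemma sum_mul_abs_rowBias_le (hA0 : ∀ A, 0 ≤ μA A) {i : Fin m}
    (hrow : RowCondProbLE μA i c₁)
    (hx0 : ∀ x, 0 ≤ μx x) (hx1 : ∑ x, μx x = 1) (hx : ∀ x, μx x ≤ c₂)
    (hε : 0 ≤ ε) (hc : 2 ^ n * c₁ * c₂ ≤ ε ^ 2) (P : Matrix (Fin m) (Fin n) (ZMod 2)) :
    ∑ x, μx x * |rowBias μA i P x| ≤ ε * prEvt μA (fun C => firstRows i C = P) := by
  have hq := prEvt_firstRows_and_row_le hA0 hrow P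
  rw [← sum_prEvt_and_eq (fun C => firstRows i C = P) (fun C => C i)] at hq ⊢
  exact sum_mul_abs_sum_mul_signChar_le (fun w => prEvt_nonneg hA0 _) hq hx0 hx1 hx hε
    (by simpa using hc)

lemma abs_hybrid_insert_sub_le (hx0 : ∀ x, 0 ≤ μx x) {i : Fin m} {T : Finset (Fin m)}
    (hT : ∀ j ∈ T, j < i) (z : Fin m → ZMod 2) :
    |hybrid μA μx (insert i T) z - hybrid μA μx T z| ≤ 2 ^ #T / 2 ^ m *
      ∑ P, ∑ x, (if ∀ j ∈ T, (P *ᵥ x) j = z j then 1 else 0) * (μx x * |rowBias μA i P x|) := by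
  rw [hybrid_insert_sub_eq fun h => lt_irrefl i (hT i h), sum_signed_eq_sum_rowBias hT, abs_mul,
    abs_mul, abs_signChar, one_mul, abs_of_pos (by positivity)]
  gcongr
  refine (abs_sum_le_sum_abs _ _).trans (sum_le_sum fun P _ => ?_)
  refine (abs_sum_le_sum_abs _ _).trans (le_of_eq (sum_congr rfl fun x _ => ?_))
  split_ifs <;> simp [abs_mul, abs_of_nonneg (hx0 x)]

lemma sum_abs_hybrid_insert_sub_le (hA0 : ∀ A, 0 ≤ μA A) (hA1 : ∑ A, μA A = 1) {i : Fin m}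
    (hrow : RowCondProbLE μA i c₁)
    (hx0 : ∀ x, 0 ≤ μx x) (hx1 : ∑ x, μx x = 1) (hx : ∀ x, μx x ≤ c₂)
    (hε : 0 ≤ ε) (hc : 2 ^ n * c₁ * c₂ ≤ ε ^ 2) {T : Finset (Fin m)} (hT : ∀ j ∈ T, j < i) :
    ∑ z, |hybrid μA μx (insert i T) z - hybrid μA μx T z| ≤ ε := by
  set G : Matrix (Fin m) (Fin n) (ZMod 2) → (Fin n → ZMod 2) → ℝ :=
    fun P x => μx x * |rowBias μA i P x|
  calc ∑ z, |hybrid μA μx (insert i T) z - hybrid μA μx T z|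
      ≤ ∑ z : Fin m → ZMod 2, 2 ^ #T / 2 ^ m *
          ∑ P, ∑ x, (if ∀ j ∈ T, (P *ᵥ x) j = z j then 1 else 0) * G P x :=
        sum_le_sum fun z _ => abs_hybrid_insert_sub_le hx0 hT z
    _ = 2 ^ #T / 2 ^ m * ∑ P, ∑ x, ∑ z : Fin m → ZMod 2,
          (if ∀ j ∈ T, (P *ᵥ x) j = z j then 1 else 0) * G P x := by
        rw [← mul_sum, sum_comm]
        exact congrArg _ (sum_congr rfl fun P _ => sum_comm)
    _ = ∑ P, ∑ x, G P x := by
        simp only [← sum_mul, sum_ite_forall_mem_eq, ← mul_sum, ← mul_assoc]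
        rw [div_mul_div_cancel₀ (by positivity), div_self (by positivity), one_mul]
    _ ≤ ∑ P, ε * prEvt μA (fun C => firstRows i C = P) :=
        sum_le_sum fun P _ => sum_mul_abs_rowBias_le hA0 hrow hx0 hx1 hx hε hc P
    _ = ε := by rw [← mul_sum, sum_prEvt_eq, hA1, mul_one]

lemma sum_abs_hybrid_sub_le (hA0 : ∀ A, 0 ≤ μA A) (hA1 : ∑ A, μA A = 1) {S : Finset (Fin m)}
    (hS : ∀ i ∉ S, RowCondProbLE μA i c₁)
    (hx0 : ∀ x, 0 ≤ μx x) (hx1 : ∑ x, μx x = 1) (hx : ∀ x, μx x ≤ c₂)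
    (hε : 0 ≤ ε) (hc : 2 ^ n * c₁ * c₂ ≤ ε ^ 2) (T : Finset (Fin m)) (hTS : Disjoint T S) :
    ∑ z, |hybrid μA μx T z - 1 / 2 ^ m| ≤ #T * ε := by
  induction T using Finset.induction_on_max with
  | empty => simp [hybrid_empty hA1 hx1]
  | insert i T hT ih =>
    rw [disjoint_insert_left] at hTS
    calc ∑ z, |hybrid μA μx (insert i T) z - 1 / 2 ^ m|
        ≤ ∑ z, (|hybrid μA μx (insert i T) z - hybrid μA μx T z| +
            |hybrid μA μx T z - 1 / 2 ^ m|) := sum_le_sum fun z _ => abs_sub_le _ _ _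
      _ ≤ ε + #T * ε := by
          rw [sum_add_distrib]
          exact add_le_add (sum_abs_hybrid_insert_sub_le hA0 hA1 (hS i hTS.1) hx0 hx1 hx hε hc hT)
            (ih hTS.2)
      _ = #(insert i T) * ε := by
          rw [card_insert_of_notMem fun h => lt_irrefl i (hT i h)]
          push_cast
          ring

end Extraction

lemma two_pow_mul_two_rpow_mul_two_rpow_le {n : ℕ} {ζ Δ α : ℝ} (hα : 2 * Δ + ζ ≤ α) :
    (2 : ℝ) ^ n * 2 ^ (-((n : ℝ) * (1 - ζ))) * 2 ^ (-(α * n)) ≤ (2 ^ (-(Δ * n))) ^ 2 := by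
  rw [← Real.rpow_natCast, ← Real.rpow_add two_pos, ← Real.rpow_add two_pos,
    ← Real.rpow_mul_natCast two_pos.le]
  refine Real.rpow_le_rpow_of_exponent_le one_le_two ?_
  push_cast
  nlinarith [mul_nonneg (Nat.cast_nonneg n : (0 : ℝ) ≤ n) (by linarith : (0 : ℝ) ≤ α - ζ - 2 * Δ)]

theorem block_source_extraction_general (m n : ℕ)
    (η ζ Δ α : ℝ)
    (hα : 2 * Δ + ζ ≤ α)
    (μA : Matrix (Fin m) (Fin n) (ZMod 2) → ℝ)
    (hA0 : ∀ A, 0 ≤ μA A) (hA1 : ∑ A, μA A = 1)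
    (μx : (Fin n → ZMod 2) → ℝ)
    (hx0 : ∀ x₀, 0 ≤ μx x₀) (hx1 : ∑ x₀, μx x₀ = 1)
    (hblock : IsBlockSource μA η ((n : ℝ) * (1 - ζ)))
    (hxent : ∀ x₀ : Fin n → ZMod 2, μx x₀ ≤ (2 : ℝ) ^ (-(α * (n : ℝ)))) :
    ∃ T : Finset (Fin m), (1 - η) * (m : ℝ) ≤ (T.card : ℝ) ∧
      (1 / 2) * ∑ z : {i : Fin m // i ∈ T} → ZMod 2,
          |prodDistOn μA μx T z - 1 / 2 ^ T.card|
        ≤ (T.card : ℝ) * (2 : ℝ) ^ (-(Δ * (n : ℝ))) := by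
  obtain ⟨S, hScard, hS⟩ := hblock
  refine ⟨Sᶜ, ?_, ?_⟩
  · rw [card_compl, Fintype.card_fin, Nat.cast_sub (by simpa using card_le_univ S)]
    linarith
  · rw [← sum_abs_hybrid_sub_eq]
    have hbound := sum_abs_hybrid_sub_le hA0 hA1 (fun i hi A₀ hA₀ w => hS A₀ hA₀ i hi w)
      hx0 hx1 hxent (by positivity)
      (two_pow_mul_two_rpow_mul_two_rpow_le hα) Sᶜ disjoint_compl_left
    have hnonneg : 0 ≤ ∑ z, |hybrid μA μx Sᶜ z - 1 / 2 ^ m| := sum_nonneg fun z _ => abs_nonneg _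
    linarith

/-- If `A'` is an `(η, n(1-ζ))`-block source, `x` has min-entropy at least `α·n` with
`α ≥ 2Δ + ζ`, and `A'` and `x` are independent, then there is a set `T` of at least `(1-η)·m`
rows such that `(A'x)_T` is `(|T|·2^{-Δn})`-close to the uniform distribution on `F₂^T`. -/
theorem block_source_extraction (m n : ℕ) (hm : 1 ≤ m) (hn : 1 ≤ n)
    (η ζ Δ α : ℝ) (hη0 : 0 ≤ η) (hη1 : η ≤ 1) (hζ : 0 ≤ ζ) (hΔ : 0 ≤ Δ) (hα0 : 0 ≤ α)
    (hα : 2 * Δ + ζ ≤ α)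
    (μA : Matrix (Fin m) (Fin n) (ZMod 2) → ℝ)
    (hA0 : ∀ A, 0 ≤ μA A) (hA1 : ∑ A, μA A = 1)
    (μx : (Fin n → ZMod 2) → ℝ)
    (hx0 : ∀ x₀, 0 ≤ μx x₀) (hx1 : ∑ x₀, μx x₀ = 1)
    (hblock : IsBlockSource μA η ((n : ℝ) * (1 - ζ)))
    (hxent : ∀ x₀ : Fin n → ZMod 2, μx x₀ ≤ (2 : ℝ) ^ (-(α * (n : ℝ)))) :
    ∃ T : Finset (Fin m), (1 - η) * (m : ℝ) ≤ (T.card : ℝ) ∧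
      (1 / 2) * ∑ z : {i : Fin m // i ∈ T} → ZMod 2,
          |prodDistOn μA μx T z - 1 / 2 ^ T.card|
        ≤ (T.card : ℝ) * (2 : ℝ) ^ (-(Δ * (n : ℝ))) :=
  block_source_extraction_general m n η ζ Δ α hα μA hA0 hA1 μx hx0 hx1 hblock hxent
end

section
/- Let G be a finite simple graph on n ≥ 2 vertices. Then either G contains a collection of at least n/(2·log₂ n) pairwise vertex-disjoint cycles, or G contains an independent set of size at least n/12. -/
/-!
Repeatedly remove from the vertex set either a vertex with at most four remaining neighbours,
giving it one of five colours not used by those neighbours, or, when every remaining vertex has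
at least five remaining neighbours, a shortest cycle of what remains. By the Moore bound a graph
of minimum degree `5` on `m` vertices has a cycle of length at most about `2 log₄ m`. If fewer
than `n / (2 log₂ n)` cycles are removed, their total length is at most `7n / 12` (by an estimate
for `n ≥ 200`, by computation for smaller `n`), so at least `5n / 12` vertices are coloured and one
colour class is an independent set of size at least `n / 12`.
-/

open Finset

/-- The number of vertices within distance `r` of a vertex in a tree with all degrees `d`. -/
def mooreBound (d r : ℕ) : ℕ := 1 + d * ∑ j ∈ range r, (d - 1) ^ j

lemma lt_mooreBound {d : ℕ} (hd : 2 ≤ d) (r : ℕ) : r < mooreBound d r := by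
  have : r ≤ ∑ j ∈ range r, (d - 1) ^ j := by
    simpa using sum_le_sum fun j (_ : j ∈ range r) => Nat.one_le_pow j (d - 1) (by omega)
  unfold mooreBound
  nlinarith

lemma three_mul_mooreBound_five_add_two (r : ℕ) : 3 * mooreBound 5 r + 2 = 5 * 4 ^ r := by
  induction r with
  | zero => simp [mooreBound]
  | succ r ih =>
    norm_num [mooreBound, sum_range_succ, pow_succ] at ih ⊢
    omega

/-- `Nat.log 4 ((3 * m + 2) / 5)` is the largest `r` with `mooreBound 5 r ≤ m`. -/
def shortCycleBound (m : ℕ) : ℕ := 2 * Nat.log 4 ((3 * m + 2) / 5) + 2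

lemma le_shortCycleBound {ℓ m : ℕ} (h : mooreBound 5 ((ℓ - 1) / 2) ≤ m) :
    ℓ ≤ shortCycleBound m := by
  have := three_mul_mooreBound_five_add_two ((ℓ - 1) / 2)
  have : (ℓ - 1) / 2 ≤ Nat.log 4 ((3 * m + 2) / 5) :=
    Nat.le_log_of_pow_le (by norm_num) ((Nat.le_div_iff_mul_le (by norm_num)).2 (by omega))
  unfold shortCycleBound
  omega

lemma shortCycleBound_mono : Monotone shortCycleBound := fun _ _ h => by
  unfold shortCycleBound
  gcongr

lemma two_pow_shortCycleBound_le {n : ℕ} (hn : 200 ≤ n) :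
    2 ^ (6 * shortCycleBound n) ≤ n ^ 7 := by
  set y := (3 * n + 2) / 5
  have hy : 4 ^ Nat.log 4 y ≤ y := Nat.pow_log_le_self 4 (by omega)
  have h500 : 500 * y ≤ 301 * n := by omega
  have hpow : 2 ^ (6 * shortCycleBound n) = 4096 * (4 ^ Nat.log 4 y) ^ 6 := by
    rw [shortCycleBound, show (4 : ℕ) = 2 ^ 2 by rfl, ← pow_mul, ← pow_mul]
    ring
  refine Nat.le_of_mul_le_mul_right ?_ (by norm_num : 0 < 500 ^ 6)
  calc 2 ^ (6 * shortCycleBound n) * 500 ^ 6 ≤ 4096 * (500 * y) ^ 6 := by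
        rw [hpow, mul_pow, mul_assoc, mul_comm (500 ^ 6)]
        gcongr
    _ ≤ 4096 * (301 * n) ^ 6 := by gcongr
    _ = 4096 * 301 ^ 6 * n ^ 6 := by ring
    _ ≤ 500 ^ 6 * 200 * n ^ 6 := Nat.mul_le_mul_right _ (by norm_num)
    _ ≤ 500 ^ 6 * n * n ^ 6 := Nat.mul_le_mul_right _ (Nat.mul_le_mul_left _ hn)
    _ = n ^ 7 * 500 ^ 6 := by ring

/-- A budget for the total length of `k` cycles removed one after another from `m` vertices, each
removal leaving at least three vertices fewer. -/
def cycleBudget : ℕ → ℕ → ℕ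
  | _, 0 => 0
  | m, k + 1 => shortCycleBound m + cycleBudget (m - 3) k

lemma cycleBudget_mono {m m' : ℕ} (h : m ≤ m') (k : ℕ) :
    cycleBudget m k ≤ cycleBudget m' k := by
  induction k generalizing m m' with
  | zero => rfl
  | succ k ih => exact add_le_add (shortCycleBound_mono h) (ih (by omega))

lemma cycleBudget_le_mul (m k : ℕ) : cycleBudget m k ≤ k * shortCycleBound m := by
  induction k generalizing m with
  | zero => simp [cycleBudget]
  | succ k ih =>
    calc cycleBudget m (k + 1) ≤ shortCycleBound m + k * shortCycleBound m := by
          grw [cycleBudget, ih, shortCycleBound_mono (Nat.sub_le m 3)]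
      _ = (k + 1) * shortCycleBound m := by ring

set_option maxRecDepth 4000 in
lemma twelve_mul_cycleBudget_le_of_lt_200 :
    ∀ n < 200, 13 ≤ n → ∀ k < 34, n ^ (2 * k) < 2 ^ n →
      12 * cycleBudget n k ≤ 7 * n := by
  decide

lemma twelve_mul_cycleBudget_le {n k : ℕ} (hn : 13 ≤ n) (hk : n ^ (2 * k) < 2 ^ n) :
    12 * cycleBudget n k ≤ 7 * n := by
  rcases lt_or_ge n 200 with hsmall | hlarge
  · have : 2 ^ (6 * k) < 2 ^ n :=
      calc 2 ^ (6 * k) = 8 ^ (2 * k) := by rw [show (8 : ℕ) = 2 ^ 3 by rfl, ← pow_mul]; ring_nf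
        _ ≤ n ^ (2 * k) := Nat.pow_le_pow_left (by omega) _
        _ < 2 ^ n := hk
    have hk6 : 6 * k < n := (Nat.pow_lt_pow_iff_right (by norm_num)).1 this
    exact twelve_mul_cycleBudget_le_of_lt_200 n hsmall hn k (by omega) hk
  · have : 2 ^ (12 * k * shortCycleBound n) < 2 ^ (7 * n) :=
      calc 2 ^ (12 * k * shortCycleBound n) = (2 ^ (6 * shortCycleBound n)) ^ (2 * k) := by
            rw [← pow_mul]; ring_nf
        _ ≤ (n ^ 7) ^ (2 * k) := Nat.pow_le_pow_left (two_pow_shortCycleBound_le hlarge) _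
        _ = (n ^ (2 * k)) ^ 7 := by rw [← pow_mul, ← pow_mul, mul_comm]
        _ < (2 ^ n) ^ 7 := Nat.pow_lt_pow_left hk (by norm_num)
        _ = 2 ^ (7 * n) := by rw [← pow_mul, mul_comm]
    have hlt : 12 * k * shortCycleBound n < 7 * n :=
      (Nat.pow_lt_pow_iff_right (by norm_num)).1 this
    have := cycleBudget_le_mul n k
    nlinarith

namespace SimpleGraph

variable {V : Type*} {G : SimpleGraph V}

section

variable [DecidableEq V]

lemma egirth_le_length_add_one_of_adj {x y : V} (h : G.Adj x y) (p : G.Walk y x)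
    (he : s(x, y) ∉ p.edges) : G.egirth ≤ (p.length + 1 : ℕ) := by
  have hc : (Walk.cons h p.bypass).IsCycle :=
    Path.cons_isCycle p.toPath h fun hmem => he (p.edges_bypass_subset_edges hmem)
  calc G.egirth ≤ (Walk.cons h p.bypass).length := egirth_le_length hc
    _ ≤ (p.length + 1 : ℕ) := by
      exact_mod_cast Nat.add_le_add_right p.length_bypass_le_length 1

lemma egirth_le_length_add_length_add_two {u x y v : V} (hux : G.Adj u x) (huy : G.Adj u y)
    (hxy : x ≠ y) (px : G.Walk v x) (py : G.Walk v y) (hx : u ∉ px.support)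
    (hy : u ∉ py.support) : G.egirth ≤ (px.length + py.length + 2 : ℕ) := by
  have he : s(y, u) ∉ (Walk.cons hux (px.reverse.append py)).edges := by
    simp only [Walk.edges_cons, Walk.edges_append, Walk.edges_reverse, List.mem_cons,
      List.mem_append, List.mem_reverse, Sym2.eq_iff]
    rintro ((⟨rfl, -⟩ | ⟨rfl, -⟩) | h | h)
    · exact huy.ne rfl
    · exact hxy rfl
    · exact hx (px.snd_mem_support_of_mem_edges h)
    · exact hy (py.snd_mem_support_of_mem_edges h)
  simpa [Walk.length_append, add_assoc, add_comm 1] using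
    egirth_le_length_add_one_of_adj huy.symm _ he

lemma Walk.dist_le_of_mem_support {v x z : V} (p : G.Walk v x) (hz : z ∈ p.support) :
    G.dist v z ≤ p.length :=
  (dist_le (p.takeUntil z hz)).trans (p.length_takeUntil_le_length hz)

lemma Walk.eq_of_mem_support_of_dist_eq_length {v x z : V} (p : G.Walk v x)
    (hz : z ∈ p.support) (hd : G.dist v z = p.length) : z = x := by
  have hsplit := congrArg Walk.length (p.take_spec hz)
  rw [Walk.length_append] at hsplit
  have := dist_le (p.takeUntil z hz)
  exact Walk.eq_of_length_eq_zero (by omega : (p.dropUntil z hz).length = 0)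

lemma Walk.IsCycle.card_support_toFinset {u : V} {c : G.Walk u u} (hc : c.IsCycle) :
    #c.support.toFinset = c.length := by
  cases c with
  | nil => exact absurd hc.three_le_length (by simp)
  | cons h p =>
    have hp : p.support.Nodup := hc.support_nodup
    rw [Walk.support_cons, List.toFinset_cons, insert_eq_of_mem (by simp),
      List.toFinset_card_of_nodup hp, Walk.length_support, Walk.length_cons]

section Moore

variable [Fintype V] [DecidableRel G.Adj] {d r : ℕ}

variable (G) in
/-- Reachability rules out the junk value `G.dist v u = 0` for unreachable `u`. -/
noncomputable def distSphere (v : V) (i : ℕ) : Finset V :=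
  {u | G.Reachable v u ∧ G.dist v u = i}

lemma mem_distSphere {v u : V} {i : ℕ} :
    u ∈ G.distSphere v i ↔ G.Reachable v u ∧ G.dist v u = i := by
  simp [distSphere]

lemma not_adj_of_mem_distSphere (hr : 2 * r < G.egirth) {v u w : V} {i : ℕ} (hi : i < r)
    (hu : u ∈ G.distSphere v i) (hw : w ∈ G.distSphere v i) : ¬G.Adj u w := by
  intro huw
  rw [mem_distSphere] at hu hw
  obtain ⟨pu, hpu⟩ := hu.1.exists_walk_length_eq_dist
  obtain ⟨pw, hpw⟩ := hw.1.exists_walk_length_eq_dist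
  have he : s(u, w) ∉ (pw.reverse.append pu).edges := by
    simp only [Walk.edges_append, Walk.edges_reverse, List.mem_append, List.mem_reverse]
    rintro (h | h)
    · exact huw.ne (pw.eq_of_mem_support_of_dist_eq_length
        (pw.fst_mem_support_of_mem_edges h) (by omega))
    · exact huw.ne (pu.eq_of_mem_support_of_dist_eq_length
        (pu.snd_mem_support_of_mem_edges h) (by omega)).symm
  have := hr.trans_le (egirth_le_length_add_one_of_adj huw _ he)
  rw [Walk.length_append, Walk.length_reverse] at this
  norm_cast at this
  omega

lemma eq_of_adj_of_mem_distSphere (hr : 2 * r < G.egirth) {v u x y : V} {i : ℕ} (hi : i < r)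
    (hu : u ∈ G.distSphere v (i + 1)) (hx : x ∈ G.distSphere v i) (hy : y ∈ G.distSphere v i)
    (hux : G.Adj u x) (huy : G.Adj u y) : x = y := by
  by_contra hxy
  rw [mem_distSphere] at hu hx hy
  obtain ⟨px, hpx⟩ := hx.1.exists_walk_length_eq_dist
  obtain ⟨py, hpy⟩ := hy.1.exists_walk_length_eq_dist
  have hux' : u ∉ px.support := fun h => by have := px.dist_le_of_mem_support h; omega
  have huy' : u ∉ py.support := fun h => by have := py.dist_le_of_mem_support h; omega
  have := hr.trans_le (egirth_le_length_add_length_add_two hux huy hxy px py hux' huy')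
  norm_cast at this
  omega

lemma mul_card_distSphere_le_card_distSphere_succ (hr : 2 * r < G.egirth)
    (hdeg : ∀ w, d ≤ G.degree w) {v : V} {i : ℕ} (hi : 1 ≤ i) (hir : i < r) :
    (d - 1) * #(G.distSphere v i) ≤ #(G.distSphere v (i + 1)) := by
  set A := G.distSphere v
  set children : V → Finset V := fun u => G.neighborFinset u ∩ A (i + 1)
  have hchildren : ∀ u ∈ A i, d - 1 ≤ #(children u) := by
    intro u hu
    have hparent : #(G.neighborFinset u ∩ A (i - 1)) ≤ 1 := by
      refine card_le_one.2 fun x hx y hy => ?_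
      rw [mem_inter, mem_neighborFinset] at hx hy
      exact eq_of_adj_of_mem_distSphere hr (by omega) (by rwa [Nat.sub_add_cancel hi])
        hx.2 hy.2 hx.1 hy.1
    have hsub : G.neighborFinset u ⊆ children u ∪ (G.neighborFinset u ∩ A (i - 1)) := by
      intro w hw
      have huw := (mem_neighborFinset _ _ _).1 hw
      have hu' := mem_distSphere.1 hu
      have hreach : G.Reachable v w := hu'.1.trans huw.reachable
      have hne : G.dist v w ≠ i := fun h =>
        not_adj_of_mem_distSphere hr hir hu (mem_distSphere.2 ⟨hreach, h⟩) huw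
      simp only [children, mem_union, mem_inter, mem_distSphere, A]
      rcases huw.diff_dist_adj (u := v) with h | h | h <;> grind
    have := (card_le_card hsub).trans (card_union_le _ _)
    rw [card_neighborFinset_eq_degree] at this
    have := hdeg u
    omega
  have hdisj : (A i : Set V).PairwiseDisjoint children := by
    intro u hu u' hu' huu'
    rw [Function.onFun, Finset.disjoint_left]
    intro w hw hw'
    rw [mem_inter, mem_neighborFinset] at hw hw'
    refine huu' ?_
    exact eq_of_adj_of_mem_distSphere hr hir hw.2 hu hu' hw.1.symm hw'.1.symm
  calc (d - 1) * #(A i) ≤ ∑ u ∈ A i, #(children u) := by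
        rw [mul_comm]; exact card_nsmul_le_sum _ _ _ hchildren
    _ = #((A i).biUnion children) := (card_biUnion hdisj).symm
    _ ≤ #(A (i + 1)) := card_le_card (biUnion_subset.2 fun _ _ => inter_subset_right)

lemma mul_pow_le_card_distSphere (hr : 2 * r < G.egirth) (hdeg : ∀ w, d ≤ G.degree w)
    (v : V) {i : ℕ} (hi : i < r) : d * (d - 1) ^ i ≤ #(G.distSphere v (i + 1)) := by
  induction i with
  | zero =>
    rw [pow_zero, mul_one]
    refine (hdeg v).trans ?_
    rw [← card_neighborFinset_eq_degree]
    refine card_le_card fun w hw => ?_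
    have hvw := (mem_neighborFinset _ _ _).1 hw
    exact mem_distSphere.2 ⟨hvw.reachable, dist_eq_one_iff_adj.2 hvw⟩
  | succ i ih =>
    calc d * (d - 1) ^ (i + 1) = (d - 1) * (d * (d - 1) ^ i) := by ring
      _ ≤ (d - 1) * #(G.distSphere v (i + 1)) := Nat.mul_le_mul_left _ (ih (by omega))
      _ ≤ #(G.distSphere v (i + 1 + 1)) :=
        mul_card_distSphere_le_card_distSphere_succ hr hdeg (by omega) hi

theorem mooreBound_le_card (hr : 2 * r < G.egirth) (hdeg : ∀ w, d ≤ G.degree w) (v : V) :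
    mooreBound d r ≤ Fintype.card V := by
  have hdisj : ((range (r + 1) : Set ℕ)).PairwiseDisjoint (G.distSphere v) := by
    intro i _ j _ hij
    rw [Function.onFun, Finset.disjoint_left]
    intro u hi hj
    exact hij ((mem_distSphere.1 hi).2.symm.trans (mem_distSphere.1 hj).2)
  calc mooreBound d r = 1 + ∑ j ∈ range r, d * (d - 1) ^ j := by rw [mooreBound, mul_sum]
    _ ≤ #(G.distSphere v 0) + ∑ j ∈ range r, #(G.distSphere v (j + 1)) := by
      gcongr with j hj
      · exact card_pos.2 ⟨v, mem_distSphere.2 ⟨.refl v, dist_self⟩⟩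
      · exact mul_pow_le_card_distSphere hr hdeg v (mem_range.1 hj)
    _ = #((range (r + 1)).biUnion (G.distSphere v)) := by
      rw [card_biUnion hdisj, sum_range_succ']
      ring
    _ ≤ Fintype.card V := card_le_univ _

theorem exists_isCycle_mooreBound_le_card [Nonempty V] (hd : 2 ≤ d)
    (hdeg : ∀ w, d ≤ G.degree w) :
    ∃ (u : V) (c : G.Walk u u), c.IsCycle ∧
      mooreBound d ((c.length - 1) / 2) ≤ Fintype.card V := by
  obtain ⟨v⟩ := ‹Nonempty V›
  have hcyclic : ¬G.IsAcyclic := fun hG =>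
    (lt_mooreBound hd _).not_ge <|
      mooreBound_le_card (r := Fintype.card V)
        (by rw [hG.egirth_eq_top]; exact_mod_cast ENat.natCast_lt_top _) hdeg v
  obtain ⟨u, c, hc, hlen⟩ := exists_egirth_eq_length.2 hcyclic
  refine ⟨u, c, hc, mooreBound_le_card ?_ hdeg v⟩
  have := hc.three_le_length
  rw [hlen]
  exact_mod_cast (by omega : 2 * ((c.length - 1) / 2) < c.length)

theorem exists_isCycle_support_subset_mooreBound_le_card {s : Finset V} (hs : s.Nonempty)
    (hd : 2 ≤ d) (hdeg : ∀ v ∈ s, d ≤ #{w ∈ s | G.Adj v w}) :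
    ∃ (u : V) (c : G.Walk u u), c.IsCycle ∧ (∀ v ∈ c.support, v ∈ s) ∧
      mooreBound d ((c.length - 1) / 2) ≤ #s := by
  have : Nonempty (s : Set V) := hs.to_subtype
  have hdeg' : ∀ w, d ≤ (G.induce (s : Set V)).degree w := by
    intro w
    have h := congrArg Finset.card (map_neighborFinset_induce (G := G) (s := (s : Set V)) w)
    rw [card_map, card_neighborFinset_eq_degree] at h
    convert hdeg w w.2 using 1
    convert h using 2
    ext
    simp [and_comm]
  obtain ⟨u, c, hc, hlen⟩ := exists_isCycle_mooreBound_le_card hd hdeg'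
  let e := Embedding.induce (G := G) (s : Set V)
  refine ⟨e u, c.map e.toHom, hc.map e.injective, ?_, ?_⟩
  · simp only [Walk.support_map, List.mem_map]
    rintro _ ⟨w, -, rfl⟩
    exact w.2
  · simpa using hlen

end Moore

end

lemma exists_forall_adj_color_ne {α : Type*} [Fintype α] [DecidableEq α] [DecidableRel G.Adj]
    (color : V → α) (P : Finset V) (v : V) (h : #{w ∈ P | G.Adj v w} < Fintype.card α) :
    ∃ a, ∀ w ∈ P, G.Adj v w → color w ≠ a := by
  obtain ⟨a, -, ha⟩ := exists_mem_notMem_of_card_lt_card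
    ((card_image_le (f := color)).trans_lt (h.trans_eq (card_univ (α := α)).symm))
  exact ⟨a, fun w hw hvw hwa => ha (mem_image.2 ⟨w, mem_filter.2 ⟨hw, hvw⟩, hwa⟩)⟩

lemma exists_independent_card_div_le {α : Type*} [Fintype α] [Nonempty α] [DecidableEq α]
    {P : Finset V} {color : V → α}
    (hcolor : ∀ a ∈ P, ∀ b ∈ P, G.Adj a b → color a ≠ color b) :
    ∃ S : Finset V, (∀ a ∈ S, ∀ b ∈ S, ¬G.Adj a b) ∧
      (#P : ℝ) / Fintype.card α ≤ #S := by
  obtain ⟨c, -, hc⟩ := exists_le_card_fiber_of_nsmul_le_card_of_maps_to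
    (fun a _ => mem_univ (color a)) univ_nonempty (b := (#P : ℝ) / Fintype.card α)
    (by rw [nsmul_eq_mul, card_univ, mul_div_cancel₀ _ (by positivity)])
  refine ⟨{x ∈ P | color x = c}, fun a ha b hb hab => ?_, hc⟩
  rw [mem_filter] at ha hb
  exact hcolor a ha.1 b hb.1 hab (ha.2.trans hb.2.symm)

variable (G) in
structure CycleColoring (s : Finset V) where
  cycles : List (Σ v, G.Walk v v)
  isCycle : ∀ c ∈ cycles, c.2.IsCycle
  support_subset : ∀ c ∈ cycles, ∀ v ∈ c.2.support, v ∈ s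
  pairwise_disjoint : cycles.Pairwise fun c c' => c.2.support.Disjoint c'.2.support
  colored : Finset V
  colored_subset : colored ⊆ s
  color : V → Fin 5
  color_ne : ∀ a ∈ colored, ∀ b ∈ colored, G.Adj a b → color a ≠ color b
  card_le : #s ≤ (cycles.map fun c => c.2.length).sum + #colored
  sum_length_le : (cycles.map fun c => c.2.length).sum ≤ cycleBudget #s cycles.length

namespace CycleColoring

def empty : CycleColoring G ∅ where
  cycles := []
  isCycle := by simp
  support_subset := by simp
  pairwise_disjoint := .nil
  colored := ∅
  colored_subset := subset_rfl
  color := fun _ => 0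
  color_ne := by simp
  card_le := by simp
  sum_length_le := by simp

lemma nonempty_of_erase [DecidableEq V] [DecidableRel G.Adj] {s : Finset V} {v : V}
    (hv : v ∈ s) (hdeg : #{w ∈ s | G.Adj v w} < 5) (D : CycleColoring G (s.erase v)) :
    Nonempty (CycleColoring G s) := by
  have hvP : v ∉ D.colored := fun h => by simpa using D.colored_subset h
  obtain ⟨a, ha⟩ := exists_forall_adj_color_ne D.color D.colored v <|
    (card_le_card (filter_subset_filter _ (D.colored_subset.trans (erase_subset v s)))).trans_lt
      (by simpa using hdeg)
  refine ⟨{ D with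
    support_subset := fun c hc w hw => mem_of_mem_erase (D.support_subset c hc w hw)
    colored := insert v D.colored
    colored_subset := insert_subset hv (D.colored_subset.trans (erase_subset v s))
    color := Function.update D.color v a
    color_ne := ?_
    card_le := ?_
    sum_length_le := D.sum_length_le.trans (cycleBudget_mono card_erase_le _) }⟩
  · have hne : ∀ w ∈ D.colored, w ≠ v := fun w hw h => hvP (h ▸ hw)
    simp only [mem_insert]
    rintro b (rfl | hb) c (rfl | hc) hbc
    · exact absurd hbc G.irrefl
    · rw [Function.update_self, Function.update_of_ne (hne c hc)]
      exact (ha c hc hbc).symm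
    · rw [Function.update_self, Function.update_of_ne (hne b hb)]
      exact ha b hb hbc.symm
    · rw [Function.update_of_ne (hne b hb), Function.update_of_ne (hne c hc)]
      exact D.color_ne b hb c hc hbc
  · have := D.card_le
    rw [card_erase_of_mem hv] at this
    rw [card_insert_of_notMem hvP]
    omega

lemma nonempty_of_sdiff [DecidableEq V] {s : Finset V} {u : V} {c : G.Walk u u}
    (hc : c.IsCycle) (hcs : ∀ v ∈ c.support, v ∈ s) (hlen : c.length ≤ shortCycleBound #s)
    (D : CycleColoring G (s \ c.support.toFinset)) : Nonempty (CycleColoring G s) := by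
  have hcard : #(s \ c.support.toFinset) + c.length = #s := by
    rw [← hc.card_support_toFinset]
    exact card_sdiff_add_card_eq_card fun v hv => hcs v (List.mem_toFinset.1 hv)
  have := hc.three_le_length
  refine ⟨{
    cycles := ⟨u, c⟩ :: D.cycles
    isCycle := by simpa [hc] using D.isCycle
    support_subset := ?_
    pairwise_disjoint := ?_
    colored := D.colored
    colored_subset := D.colored_subset.trans sdiff_subset
    color := D.color
    color_ne := D.color_ne
    card_le := ?_
    sum_length_le := ?_ }⟩
  · simp only [List.mem_cons, forall_eq_or_imp]
    exact ⟨hcs, fun c' hc' v hv => (mem_sdiff.1 (D.support_subset c' hc' v hv)).1⟩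
  · refine List.pairwise_cons.2 ⟨fun c' hc' v hv hv' => ?_, D.pairwise_disjoint⟩
    exact (mem_sdiff.1 (D.support_subset c' hc' v hv')).2 (List.mem_toFinset.2 hv)
  · have := D.card_le
    simp only [List.map_cons, List.sum_cons]
    omega
  · have := D.sum_length_le.trans (cycleBudget_mono (by omega : _ ≤ #s - 3) D.cycles.length)
    simp only [List.map_cons, List.sum_cons, List.length_cons, cycleBudget]
    omega

theorem nonempty [Fintype V] [DecidableEq V] [DecidableRel G.Adj] (s : Finset V) :
    Nonempty (CycleColoring G s) := by
  induction s using Finset.strongInduction with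
  | H s ih =>
  obtain rfl | hs := s.eq_empty_or_nonempty
  · exact ⟨empty⟩
  by_cases hpeel : ∃ v ∈ s, #{w ∈ s | G.Adj v w} < 5
  · obtain ⟨v, hv, hdeg⟩ := hpeel
    exact nonempty_of_erase hv hdeg (ih _ (erase_ssubset hv)).some
  · push Not at hpeel
    obtain ⟨u, c, hc, hcs, hmoore⟩ :=
      exists_isCycle_support_subset_mooreBound_le_card hs (by norm_num) hpeel
    have hF : (c.support.toFinset).Nonempty := ⟨u, by simp⟩
    exact nonempty_of_sdiff hc hcs (le_shortCycleBound hmoore)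
      (ih _ (sdiff_ssubset (fun v hv => hcs v (List.mem_toFinset.1 hv)) hF)).some

end CycleColoring

end SimpleGraph

lemma two_le_of_lt_div_logb {n k : ℕ} (hk : (k : ℝ) < n / (2 * Real.logb 2 n)) : 2 ≤ n := by
  by_contra! h
  have := k.cast_nonneg (α := ℝ)
  interval_cases n <;> simp at hk <;> linarith

lemma pow_two_mul_lt_two_pow_of_lt_div_logb {n k : ℕ}
    (hk : (k : ℝ) < n / (2 * Real.logb 2 n)) : n ^ (2 * k) < 2 ^ n := by
  have hn := two_le_of_lt_div_logb hk
  have hL : 0 < Real.logb 2 n := Real.logb_pos (by norm_num) (by exact_mod_cast hn)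
  rw [lt_div_iff₀ (by positivity)] at hk
  have : Real.logb 2 ((n : ℝ) ^ (2 * k)) < n := by
    rw [Real.logb_pow]
    push_cast
    linarith
  rw [Real.logb_lt_iff_lt_rpow (by norm_num) (by positivity), Real.rpow_natCast] at this
  exact_mod_cast this

theorem disjoint_cycles_or_independent_set_general
    {V : Type*} [Fintype V] (G : SimpleGraph V) :
    (∃ (k : ℕ) (c : Fin k → Σ v : V, G.Walk v v),
        (∀ i, (c i).2.IsCycle) ∧
        (∀ i j, i ≠ j → ∀ v : V, v ∈ (c i).2.support → v ∉ (c j).2.support) ∧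
        (Fintype.card V : ℝ) / (2 * Real.logb 2 (Fintype.card V : ℝ)) ≤ (k : ℝ)) ∨
      (∃ S : Finset V, (∀ a ∈ S, ∀ b ∈ S, ¬ G.Adj a b) ∧
        (Fintype.card V : ℝ) / 12 ≤ (S.card : ℝ)) := by
  classical
  obtain ⟨D⟩ := SimpleGraph.CycleColoring.nonempty (G := G) univ
  by_cases hk : (Fintype.card V : ℝ) / (2 * Real.logb 2 (Fintype.card V)) ≤ D.cycles.length
  · refine .inl ⟨_, D.cycles.get, fun i => D.isCycle _ (List.get_mem _ _), fun i j hij => ?_,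
      hk⟩
    rcases lt_or_gt_of_ne hij with h | h
    exacts [D.pairwise_disjoint.rel_get_of_lt h,
      fun v hi hj => D.pairwise_disjoint.rel_get_of_lt h hj hi]
  right
  rcases le_or_gt (Fintype.card V) 12 with hsmall | hlarge
  · have hn := two_le_of_lt_div_logb (not_le.1 hk)
    obtain ⟨v⟩ : Nonempty V := Fintype.card_pos_iff.1 (by omega)
    refine ⟨{v}, by simp, ?_⟩
    rw [card_singleton, Nat.cast_one, div_le_one (by norm_num)]
    exact_mod_cast hsmall
  obtain ⟨S, hS, hcard⟩ := G.exists_independent_card_div_le D.color_ne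
  refine ⟨S, hS, le_trans ?_ hcard⟩
  have hcover := D.card_le
  have hsum := D.sum_length_le
  have hbudget := twelve_mul_cycleBudget_le hlarge
    (pow_two_mul_lt_two_pow_of_lt_div_logb (not_le.1 hk))
  rw [card_univ] at hcover hsum
  rw [Fintype.card_fin, div_le_div_iff₀ (by norm_num) (by norm_num)]
  exact_mod_cast (by omega : Fintype.card V * 5 ≤ #D.colored * 12)

/-- Every finite simple graph on `n ≥ 2` vertices either contains at least `n / (2·log₂ n)`
pairwise vertex-disjoint cycles, or contains an independent set of size at least `n / 12`. -/
theorem disjoint_cycles_or_independent_set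
    {V : Type*} [Fintype V] [DecidableEq V] (G : SimpleGraph V)
    (hn : 2 ≤ Fintype.card V) :
    (∃ (k : ℕ) (c : Fin k → Σ v : V, G.Walk v v),
        (∀ i, (c i).2.IsCycle) ∧
        (∀ i j, i ≠ j → ∀ v : V, v ∈ (c i).2.support → v ∉ (c j).2.support) ∧
        (Fintype.card V : ℝ) / (2 * Real.logb 2 (Fintype.card V : ℝ)) ≤ (k : ℝ)) ∨
      (∃ S : Finset V, (∀ a ∈ S, ∀ b ∈ S, ¬ G.Adj a b) ∧
        (Fintype.card V : ℝ) / 12 ≤ (S.card : ℝ)) :=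
  disjoint_cycles_or_independent_set_general G
end

section
/- Let V be a finite set of attributes with a nonempty domain D_v for each v ∈ V, let k ≥ 2, and let e₁, …, e_k ⊆ V satisfy e_i ∩ e_j ⊆ e₁ for all 2 ≤ i < j ≤ k. For each i ∈ {1, …, k} let R_i be a set of tuples over e_i, i.e., a subset of Π_{v∈e_i} D_v. For i = 2, …, k define R′_i = { s ∈ R₁ : there exists s′ ∈ R_i with s(v) = s′(v) for all v ∈ e₁ ∩ e_i }. Then there exists a tuple t ∈ Π_{v∈V} D_v with t|_{e_i} ∈ R_i for every i ∈ {1, …, k} (i.e., the natural join R₁ ⋈ ⋯ ⋈ R_k is nonempty) if and only if R′_2 ∩ R′_3 ∩ ⋯ ∩ R′_k ≠ ∅. -/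
/-! The semijoin witness `s ∈ R₁` comes with one tuple `s'ᵢ ∈ Rᵢ` per leaf, each agreeing with `s`
on `e₁ ∩ eᵢ`. Two leaves overlap only inside the center `e₁`, where both agree with `s`, so the
family `s, s'₂, …, s'ₖ` is pairwise compatible and glues to a single tuple over `V`. -/

section Gluing

variable {ι V : Type*} {D : V → Type*} (e : ι → Set V)

def PairwiseAgree (s : ∀ i, ∀ v : e i, D v) : Prop :=
  ∀ i j (v : V) (hi : v ∈ e i) (hj : v ∈ e j), s i ⟨v, hi⟩ = s j ⟨v, hj⟩

theorem exists_restrict_eq_of_pairwiseAgree [∀ v, Nonempty (D v)] {s : ∀ i, ∀ v : e i, D v}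
    (hs : PairwiseAgree e s) : ∃ t : ∀ v, D v, ∀ i, (fun v : e i => t v) = s i := by
  classical
  refine ⟨fun v => if h : ∃ i, v ∈ e i then s h.choose ⟨v, h.choose_spec⟩
    else Classical.arbitrary (D v), fun i => funext fun ⟨v, hv⟩ => ?_⟩
  have h : ∃ i, v ∈ e i := ⟨i, hv⟩
  simp only [dif_pos h]
  exact hs _ _ v _ hv

theorem pairwiseAgree_of_star {c : ι} (hstar : ∀ i j, i ≠ c → j ≠ c → i ≠ j → e i ∩ e j ⊆ e c)
    {s : ∀ i, ∀ v : e i, D v}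
    (hs : ∀ i, i ≠ c → ∀ (v : V) (hc : v ∈ e c) (hi : v ∈ e i), s c ⟨v, hc⟩ = s i ⟨v, hi⟩) :
    PairwiseAgree e s := by
  have hcenter : ∀ i (v : V) (hc : v ∈ e c) (hi : v ∈ e i), s c ⟨v, hc⟩ = s i ⟨v, hi⟩ := by
    intro i v hc hi
    by_cases hic : i = c
    · subst hic; rfl
    · exact hs i hic v hc hi
  intro i j v hi hj
  by_cases hij : i = j
  · subst hij; rfl
  have hc : v ∈ e c := by
    by_cases hic : i = c
    · exact hic ▸ hi
    by_cases hjc : j = c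
    · exact hjc ▸ hj
    exact hstar i j hic hjc hij ⟨hi, hj⟩
  rw [← hcenter i v hc hi, hcenter j v hc hj]

end Gluing

theorem star_join_iff_semijoin_intersection_general
    {V : Type*} [DecidableEq V] (D : V → Type*) [∀ v, Nonempty (D v)]
    (k : ℕ) (hk : 2 ≤ k) (e : Fin k → Finset V)
    (i₀ : Fin k)
    (hstar : ∀ i j : Fin k, i ≠ i₀ → j ≠ i₀ → i ≠ j → (e i ∩ e j) ⊆ e i₀)
    (R : ∀ i : Fin k, Set (∀ v : {x : V // x ∈ e i}, D v.1)) :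
    (∃ t : ∀ v : V, D v, ∀ i : Fin k,
        (fun v : {x : V // x ∈ e i} => t v.1) ∈ R i) ↔
      (∃ s : ∀ v : {x : V // x ∈ e i₀}, D v.1, ∀ i : Fin k, i ≠ i₀ →
        s ∈ R i₀ ∧ ∃ s' ∈ R i, ∀ (v : V) (hv0 : v ∈ e i₀) (hvi : v ∈ e i),
          s ⟨v, hv0⟩ = s' ⟨v, hvi⟩) := by
  constructor
  · rintro ⟨t, ht⟩
    exact ⟨fun v => t v.1, fun i _ => ⟨ht i₀, fun v => t v.1, ht i, fun _ _ _ => rfl⟩⟩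
  · rintro ⟨s, hs⟩
    have : Nontrivial (Fin k) := Fin.nontrivial_iff_two_le.mpr hk
    obtain ⟨j, hj⟩ := exists_ne i₀
    choose! s' hs'R hs'agree using fun i hi => (hs i hi).2
    set u := Function.update s' i₀ s
    have hu₀ : u i₀ = s := Function.update_self i₀ s s'
    have hu : ∀ i, i ≠ i₀ → u i = s' i := fun i hi => Function.update_of_ne hi s s'
    have hagree : PairwiseAgree (fun i => (e i : Set V)) u :=
      pairwiseAgree_of_star _ (fun i j hi hj hij => by exact_mod_cast hstar i j hi hj hij)
        fun i hi v hc hv => by rw [hu i hi, hu₀]; exact hs'agree i hi v hc hv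
    obtain ⟨t, ht⟩ := exists_restrict_eq_of_pairwiseAgree _ hagree
    refine ⟨t, fun i => ?_⟩
    rw [show (fun v : {x : V // x ∈ e i} => t v.1) = u i from ht i]
    by_cases hi : i = i₀
    · subst hi; rw [hu₀]; exact (hs j hj).1
    · rw [hu i hi]; exact hs'R i hi

/-- For a star-shaped query with center `e i₀` (the first relation) and leaves `e i` (`i ≠ i₀`),
the natural join `R₁ ⋈ ⋯ ⋈ R_k` is nonempty if and only if the intersection of the semijoin
reductions `R'_2 ∩ ⋯ ∩ R'_k` is nonempty. -/
theorem star_join_iff_semijoin_intersection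
    {V : Type*} [Fintype V] [DecidableEq V] (D : V → Type*) [∀ v, Nonempty (D v)]
    (k : ℕ) (hk : 2 ≤ k) (e : Fin k → Finset V)
    (i₀ : Fin k) (hi₀ : (i₀ : ℕ) = 0)
    (hstar : ∀ i j : Fin k, i ≠ i₀ → j ≠ i₀ → i ≠ j → (e i ∩ e j) ⊆ e i₀)
    (R : ∀ i : Fin k, Set (∀ v : {x : V // x ∈ e i}, D v.1)) :
    (∃ t : ∀ v : V, D v, ∀ i : Fin k,
        (fun v : {x : V // x ∈ e i} => t v.1) ∈ R i) ↔
      (∃ s : ∀ v : {x : V // x ∈ e i₀}, D v.1, ∀ i : Fin k, i ≠ i₀ →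
        s ∈ R i₀ ∧ ∃ s' ∈ R i, ∀ (v : V) (hv0 : v ∈ e i₀) (hvi : v ∈ e i),
          s ⟨v, hv0⟩ = s' ⟨v, hvi⟩) :=
  star_join_iff_semijoin_intersection_general D k hk e i₀ hstar R
end
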